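/- Let (X, ‖·‖, ≼) be a regular partially ordered Banach space whose partial order is induced by a closed convex cone K. Suppose F : K → K is an ≼-decreasing mapping satisfying condition (H¹), and F is demi-continuous. Then F has a unique fixed point x* in K, this fixed point satisfies x* ≼ F(0), and for every point z ∈ K the iterates Fⁿ z converge in norm to x* as n → ∞. (Theorem 5.2, case (b)) -/

import Mathlib

/-- The partial order on a Banach space induced by a cone `K`: `x ≼ y` iff `y - x ∈ K`. -/
def coneLe {X : Type*} [NormedAddCommGroup X] (K : Set X) (x y : X) : Prop := y - x ∈ K

/-!
The even iterates `aₙ = F²ⁿ 0` increase and the odd iterates `bₙ = F²ⁿ⁺¹ 0` decrease, with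
`aₙ ≼ bₙ`, so by regularity they converge to some `p` and `q`. Demi-continuity passes
`F aₙ = bₙ` and `F bₙ = aₙ₊₁` to the limit, giving `F p = q` and `F q = p`, hence `p = q`
by (H¹). Every orbit `Fⁿ z` is squeezed between the two sequences, and a regular cone is
(sequentially) normal, so the orbit converges to `p` as well.
-/

open Filter Topology

def IsRegularCone {X : Type*} [NormedAddCommGroup X] (K : Set X) : Prop :=
  ∀ u : ℕ → X, (∀ n, coneLe K (u n) (u (n + 1))) →
    (∃ b, ∀ n, coneLe K (u n) b) → ∃ p, Tendsto u atTop (𝓝 p)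

def DemicontinuousOn {X : Type*} [NormedAddCommGroup X] [NormedSpace ℝ X] (F : X → X)
    (K : Set X) : Prop :=
  ∀ (u : ℕ → X), (∀ n, u n ∈ K) → ∀ p ∈ K, Tendsto u atTop (𝓝 p) →
    ∀ f : X →L[ℝ] ℝ, Tendsto (fun n => f (F (u n))) atTop (𝓝 (f (F p)))

section Cone

variable {X : Type*} [NormedAddCommGroup X] {K : Set X}

@[simp]
lemma zero_coneLe_iff {x : X} : coneLe K 0 x ↔ x ∈ K := by
  simp [coneLe]

lemma coneLe_trans (hKadd : ∀ x ∈ K, ∀ y ∈ K, x + y ∈ K) {x y z : X}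
    (hxy : coneLe K x y) (hyz : coneLe K y z) : coneLe K x z := by
  simpa [coneLe] using hKadd _ hyz _ hxy

lemma neg_coneLe_neg_iff {x y : X} : coneLe K (-x) (-y) ↔ coneLe K y x := by
  simp [coneLe, neg_add_eq_sub]

lemma sub_coneLe_sub_iff_right {x y z : X} : coneLe K (x - z) (y - z) ↔ coneLe K x y := by
  simp [coneLe]

lemma coneLe_of_tendsto_of_tendsto (hKclosed : IsClosed K) {ι : Type*} {l : Filter ι}
    [l.NeBot] {u v : ι → X} {a b : X} (hu : Tendsto u l (𝓝 a)) (hv : Tendsto v l (𝓝 b))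
    (huv : ∀ᶠ i in l, coneLe K (u i) (v i)) : coneLe K a b :=
  hKclosed.mem_of_tendsto (hv.sub hu) huv

namespace IsRegularCone

lemma exists_tendsto_of_antitone (hreg : IsRegularCone K) {u : ℕ → X}
    (hu : ∀ n, coneLe K (u (n + 1)) (u n)) (hbdd : ∃ c, ∀ n, coneLe K c (u n)) :
    ∃ p, Tendsto u atTop (𝓝 p) := by
  obtain ⟨c, hc⟩ := hbdd
  obtain ⟨p, hp⟩ := hreg (fun n => -u n) (fun n => neg_coneLe_neg_iff.2 (hu n))
    ⟨-c, fun n => neg_coneLe_neg_iff.2 (hc n)⟩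
  exact ⟨-p, by simpa using hp.neg⟩

/-- If `0 ≼ xⱼ ≼ yⱼ` and `∑ yⱼ` converges, the increasing partial sums of `∑ xⱼ` are bounded
by `∑ yⱼ`, hence converge. -/
lemma tendsto_zero_of_coneLe_of_summable (hreg : IsRegularCone K) (hKclosed : IsClosed K)
    (hK0 : (0 : X) ∈ K) (hKadd : ∀ x ∈ K, ∀ y ∈ K, x + y ∈ K) {x y : ℕ → X}
    (hx : ∀ n, x n ∈ K) (hxy : ∀ n, coneLe K (x n) (y n)) (hy : Summable y) :
    Tendsto x atTop (𝓝 0) := by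
  have hsum_mem : ∀ (f : ℕ → X) (s : Finset ℕ), (∀ i ∈ s, f i ∈ K) → ∑ i ∈ s, f i ∈ K :=
    fun f s hf => Finset.sum_induction f (· ∈ K) (fun a b ha hb => hKadd a ha b hb) hK0 hf
  have hy_mem : ∀ n, y n ∈ K := fun n => by
    simpa [coneLe] using hKadd _ (hxy n) _ (hx n)
  set S : ℕ → X := fun m => ∑ i ∈ Finset.range m, x i
  have hS_mono : ∀ m, coneLe K (S m) (S (m + 1)) := fun m => by
    simpa [S, coneLe, Finset.sum_range_succ] using hx m
  have hS_le : ∀ m N, m ≤ N → coneLe K (S m) (∑ i ∈ Finset.range N, y i) := by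
    intro m N hmN
    have hsplit : ∑ i ∈ Finset.range N, y i - S m =
        ∑ i ∈ Finset.range m, (y i - x i) + ∑ i ∈ Finset.Ico m N, y i := by
      rw [Finset.sum_sub_distrib, ← Finset.sum_range_add_sum_Ico _ hmN]
      abel
    rw [coneLe, hsplit]
    exact hKadd _ (hsum_mem _ _ fun i _ => hxy i) _ (hsum_mem _ _ fun i _ => hy_mem i)
  have hS_bdd : ∀ m, coneLe K (S m) (∑' i, y i) := fun m =>
    coneLe_of_tendsto_of_tendsto hKclosed tendsto_const_nhds hy.hasSum.tendsto_sum_nat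
      (eventually_atTop.2 ⟨m, hS_le m⟩)
  obtain ⟨s, hs⟩ := hreg S hS_mono ⟨_, hS_bdd⟩
  simpa [S, Finset.sum_range_succ] using (hs.comp (tendsto_add_atTop_nat 1)).sub hs

lemma tendsto_zero_of_coneLe [CompleteSpace X] (hreg : IsRegularCone K)
    (hKclosed : IsClosed K) (hK0 : (0 : X) ∈ K) (hKadd : ∀ x ∈ K, ∀ y ∈ K, x + y ∈ K)
    {x y : ℕ → X} (hx : ∀ n, x n ∈ K) (hxy : ∀ n, coneLe K (x n) (y n))
    (hy : Tendsto y atTop (𝓝 0)) : Tendsto x atTop (𝓝 0) := by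
  by_contra hx0
  obtain ⟨ε, hε, hfreq⟩ : ∃ ε > 0, ∃ᶠ n in atTop, ε ≤ ‖x n‖ := by
    simpa [Metric.tendsto_nhds, dist_eq_norm, Filter.not_eventually, frequently_atTop] using hx0
  -- a subsequence along which `x` stays `ε`-large while `y` becomes summable
  have hsub : ∀ j : ℕ, ∃ n, ε ≤ ‖x n‖ ∧ ‖y n‖ ≤ (1 / 2 : ℝ) ^ j := fun j =>
    (hfreq.and_eventually (hy.norm.eventually
      (ge_mem_nhds (show ‖(0 : X)‖ < (1 / 2) ^ j by rw [norm_zero]; positivity)))).exists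
  choose n hxn hyn using hsub
  have hx_sub : Tendsto (x ∘ n) atTop (𝓝 0) :=
    tendsto_zero_of_coneLe_of_summable hreg hKclosed hK0 hKadd (fun j => hx (n j))
      (fun j => hxy (n j)) (Summable.of_norm_bounded summable_geometric_two hyn)
  obtain ⟨j, hj⟩ := (hx_sub.norm.eventually (gt_mem_nhds (by simpa using hε))).exists
  exact (hxn j).not_gt (by simpa using hj)

lemma tendsto_of_coneLe_of_coneLe [CompleteSpace X]
    (hreg : IsRegularCone K) (hKclosed : IsClosed K) (hK0 : (0 : X) ∈ K)
    (hKadd : ∀ x ∈ K, ∀ y ∈ K, x + y ∈ K) {u c v : ℕ → X} {L : X}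
    (hu : Tendsto u atTop (𝓝 L)) (hv : Tendsto v atTop (𝓝 L))
    (huc : ∀ n, coneLe K (u n) (c n)) (hcv : ∀ n, coneLe K (c n) (v n)) :
    Tendsto c atTop (𝓝 L) := by
  have hcu : Tendsto (fun n => c n - u n) atTop (𝓝 0) :=
    tendsto_zero_of_coneLe hreg hKclosed hK0 hKadd huc
      (fun n => sub_coneLe_sub_iff_right.2 (hcv n)) (by simpa using hv.sub hu)
  simpa using hcu.add hu

end IsRegularCone

end Cone

section Iteration

variable {X : Type*} [NormedAddCommGroup X] {K : Set X} {F : X → X}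

lemma DemicontinuousOn.eq_of_tendsto [NormedSpace ℝ X] (hF : DemicontinuousOn F K)
    {u : ℕ → X} (hu : ∀ n, u n ∈ K) {p q : X} (hp : p ∈ K) (hup : Tendsto u atTop (𝓝 p))
    (hFu : Tendsto (fun n => F (u n)) atTop (𝓝 q)) : F p = q :=
  (SeparatingDual.eq_iff_forall_dual_eq (R := ℝ)).2 fun g =>
    tendsto_nhds_unique (hF u hu p hp hup g) ((g.continuous.tendsto q).comp hFu)

lemma coneLe_iterate_of_coneLe (hFmaps : ∀ x ∈ K, F x ∈ K)
    (hFdec : ∀ x ∈ K, ∀ y ∈ K, coneLe K x y → coneLe K (F y) (F x))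
    {x y : X} (hx : x ∈ K) (hy : y ∈ K) (hxy : coneLe K x y) (k : ℕ) :
    coneLe K (F^[2 * k] x) (F^[2 * k] y) ∧ coneLe K (F^[2 * k + 1] y) (F^[2 * k + 1] x) := by
  have hmem : ∀ n, ∀ z ∈ K, F^[n] z ∈ K := fun n z hz => Set.MapsTo.iterate hFmaps n hz
  induction k with
  | zero => simpa using ⟨hxy, hFdec x hx y hy hxy⟩
  | succ k ih =>
    have heven : coneLe K (F^[2 * (k + 1)] x) (F^[2 * (k + 1)] y) := by
      rw [show 2 * (k + 1) = 2 * k + 1 + 1 by ring, Function.iterate_succ_apply' F _ x,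
        Function.iterate_succ_apply' F _ y]
      exact hFdec _ (hmem _ _ hy) _ (hmem _ _ hx) ih.2
    refine ⟨heven, ?_⟩
    rw [Function.iterate_succ_apply' F _ x, Function.iterate_succ_apply' F _ y]
    exact hFdec _ (hmem _ _ hx) _ (hmem _ _ hy) heven

lemma iterate_zero_coneLe_iterate (hK0 : (0 : X) ∈ K) (hFmaps : ∀ x ∈ K, F x ∈ K)
    (hFdec : ∀ x ∈ K, ∀ y ∈ K, coneLe K x y → coneLe K (F y) (F x))
    {w : X} (hw : w ∈ K) (n : ℕ) :
    coneLe K (F^[2 * (n / 2)] 0) (F^[n] w) ∧ coneLe K (F^[n + 1] w) (F^[2 * (n / 2) + 1] 0) := by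
  have hw' : F^[n % 2] w ∈ K := Set.MapsTo.iterate hFmaps _ hw
  obtain ⟨hlow, hup⟩ :=
    coneLe_iterate_of_coneLe hFmaps hFdec hK0 hw' (zero_coneLe_iff.2 hw') (n / 2)
  rw [← Function.iterate_add_apply, Nat.div_add_mod] at hlow
  rw [← Function.iterate_add_apply, show 2 * (n / 2) + 1 + n % 2 = n + 1 by omega] at hup
  exact ⟨hlow, hup⟩

namespace IsRegularCone

lemma exists_tendsto_iterate_zero (hreg : IsRegularCone K) (hK0 : (0 : X) ∈ K)
    (hKadd : ∀ x ∈ K, ∀ y ∈ K, x + y ∈ K) (hFmaps : ∀ x ∈ K, F x ∈ K)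
    (hFdec : ∀ x ∈ K, ∀ y ∈ K, coneLe K x y → coneLe K (F y) (F x)) :
    ∃ p q, Tendsto (fun n => F^[2 * n] 0) atTop (𝓝 p) ∧
      Tendsto (fun n => F^[2 * n + 1] 0) atTop (𝓝 q) := by
  have hmem : ∀ n, F^[n] 0 ∈ K := fun n => Set.MapsTo.iterate hFmaps n hK0
  have hstep := coneLe_iterate_of_coneLe hFmaps hFdec hK0 (hmem 2) (zero_coneLe_iff.2 (hmem 2))
  simp only [← Function.iterate_add_apply] at hstep
  have heven_mono : ∀ n, coneLe K (F^[2 * n] 0) (F^[2 * (n + 1)] 0) := fun n => (hstep n).1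
  have hodd_anti : ∀ n, coneLe K (F^[2 * (n + 1) + 1] 0) (F^[2 * n + 1] 0) := fun n => by
    simpa only [show 2 * (n + 1) + 1 = 2 * n + 1 + 2 by ring] using (hstep n).2
  have heven_bdd : ∀ n, coneLe K (F^[2 * n] 0) (F 0) := fun n => by
    refine coneLe_trans hKadd (heven_mono n) ?_
    rw [show 2 * (n + 1) = 2 * n + 1 + 1 by ring, Function.iterate_succ_apply']
    exact hFdec 0 hK0 _ (hmem _) (zero_coneLe_iff.2 (hmem _))
  obtain ⟨p, hp⟩ := hreg _ heven_mono ⟨F 0, heven_bdd⟩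
  obtain ⟨q, hq⟩ := hreg.exists_tendsto_of_antitone hodd_anti
    ⟨0, fun n => zero_coneLe_iff.2 (hmem _)⟩
  exact ⟨p, q, hp, hq⟩

lemma tendsto_iterate [CompleteSpace X] (hreg : IsRegularCone K)
    (hKclosed : IsClosed K) (hK0 : (0 : X) ∈ K) (hKadd : ∀ x ∈ K, ∀ y ∈ K, x + y ∈ K)
    (hFmaps : ∀ x ∈ K, F x ∈ K)
    (hFdec : ∀ x ∈ K, ∀ y ∈ K, coneLe K x y → coneLe K (F y) (F x)) {p : X}
    (heven : Tendsto (fun n => F^[2 * n] 0) atTop (𝓝 p))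
    (hodd : Tendsto (fun n => F^[2 * n + 1] 0) atTop (𝓝 p)) {w : X} (hw : w ∈ K) :
    Tendsto (fun n => F^[n] w) atTop (𝓝 p) := by
  have hdiv : Tendsto (· / 2) atTop atTop := Nat.tendsto_div_const_atTop two_ne_zero
  refine (tendsto_add_atTop_iff_nat 1).1 <| hreg.tendsto_of_coneLe_of_coneLe hKclosed hK0 hKadd
    ((heven.comp hdiv).comp (tendsto_add_atTop_nat 1)) (hodd.comp hdiv)
    (fun n => (iterate_zero_coneLe_iterate hK0 hFmaps hFdec hw (n + 1)).1)
    (fun n => (iterate_zero_coneLe_iterate hK0 hFmaps hFdec hw n).2)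

end IsRegularCone

end Iteration

theorem decreasing_demicontinuous_unique_fixed_point_of_regular_general
    {X : Type*} [NormedAddCommGroup X] [NormedSpace ℝ X] [CompleteSpace X]
    (K : Set X) (hKclosed : IsClosed K) (hK0 : (0 : X) ∈ K)
    (hKadd : ∀ x ∈ K, ∀ y ∈ K, x + y ∈ K)
    -- regularity: every ≼-increasing ≼-upper-bounded sequence converges in norm
    (hreg : ∀ u : ℕ → X, (∀ n, coneLe K (u n) (u (n + 1))) →
      (∃ b, ∀ n, coneLe K (u n) b) → ∃ p, Filter.Tendsto u Filter.atTop (nhds p))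
    -- F maps K into K and is ≼-decreasing
    (F : X → X) (hFmaps : ∀ x ∈ K, F x ∈ K)
    (hFdec : ∀ x ∈ K, ∀ y ∈ K, coneLe K x y → coneLe K (F y) (F x))
    -- F satisfies condition (H¹)
    (hH1 : ∀ u ∈ K, ∀ v ∈ K, F u = v → F v = u → u = v)
    -- F is demi-continuous: norm convergence is sent to weak convergence
    (hFdemi : ∀ (u : ℕ → X), (∀ n, u n ∈ K) → ∀ p ∈ K,
      Filter.Tendsto u Filter.atTop (nhds p) →
      ∀ f : X →L[ℝ] ℝ, Filter.Tendsto (fun n => f (F (u n))) Filter.atTop (nhds (f (F p)))) :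
    ∃ x : X, x ∈ K ∧ F x = x ∧ coneLe K x (F 0) ∧
      (∀ y ∈ K, F y = y → y = x) ∧
      ∀ z ∈ K, Filter.Tendsto (fun n => F^[n] z) Filter.atTop (nhds x) := by
  have hmem : ∀ n, F^[n] 0 ∈ K := fun n => Set.MapsTo.iterate hFmaps n hK0
  obtain ⟨p, q, hp, hq⟩ := IsRegularCone.exists_tendsto_iterate_zero hreg hK0 hKadd hFmaps hFdec
  have hpK : p ∈ K := hKclosed.mem_of_tendsto hp (Eventually.of_forall fun _ => hmem _)
  have hqK : q ∈ K := hKclosed.mem_of_tendsto hq (Eventually.of_forall fun _ => hmem _)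
  have hFp : F p = q := DemicontinuousOn.eq_of_tendsto hFdemi (fun _ => hmem _) hpK hp
    (hq.congr fun n => Function.iterate_succ_apply' F (2 * n) 0)
  have hFq : F q = p := DemicontinuousOn.eq_of_tendsto hFdemi (fun _ => hmem _) hqK hq
    ((hp.comp (tendsto_add_atTop_nat 1)).congr fun n =>
      Function.iterate_succ_apply' F (2 * n + 1) 0)
  obtain rfl : p = q := hH1 p hpK q hqK hFp hFq
  have horbit : ∀ z ∈ K, Tendsto (fun n => F^[n] z) atTop (𝓝 p) := fun z hz =>
    IsRegularCone.tendsto_iterate hreg hKclosed hK0 hKadd hFmaps hFdec hp hq hz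
  refine ⟨p, hpK, hFp, hFp ▸ hFdec 0 hK0 p hpK (zero_coneLe_iff.2 hpK), fun y hy hFy => ?_,
    horbit⟩
  simpa [Function.iterate_fixed hFy] using horbit y hy

/-- Theorem 5.2, case (b): in a regular partially ordered Banach space with order induced
by the closed convex cone `K`, an ≼-decreasing demi-continuous mapping `F : K → K`
satisfying condition (H¹) has a unique fixed point `x*` in `K`; moreover `x* ≼ F 0` and
for every `z ∈ K` the iterates `Fⁿ z` converge in norm to `x*`. -/
theorem decreasing_demicontinuous_unique_fixed_point_of_regular
    {X : Type*} [NormedAddCommGroup X] [NormedSpace ℝ X] [CompleteSpace X]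
    (K : Set X) (hKclosed : IsClosed K) (hK0 : (0 : X) ∈ K)
    (hKadd : ∀ x ∈ K, ∀ y ∈ K, x + y ∈ K)
    (hKsmul : ∀ c : ℝ, 0 ≤ c → ∀ x ∈ K, c • x ∈ K)
    (hKpointed : ∀ x ∈ K, -x ∈ K → x = 0)
    -- regularity: every ≼-increasing ≼-upper-bounded sequence converges in norm
    (hreg : ∀ u : ℕ → X, (∀ n, coneLe K (u n) (u (n + 1))) →
      (∃ b, ∀ n, coneLe K (u n) b) → ∃ p, Filter.Tendsto u Filter.atTop (nhds p))
    -- F maps K into K and is ≼-decreasing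
    (F : X → X) (hFmaps : ∀ x ∈ K, F x ∈ K)
    (hFdec : ∀ x ∈ K, ∀ y ∈ K, coneLe K x y → coneLe K (F y) (F x))
    -- F satisfies condition (H¹)
    (hH1 : ∀ u ∈ K, ∀ v ∈ K, F u = v → F v = u → u = v)
    -- F is demi-continuous: norm convergence is sent to weak convergence
    (hFdemi : ∀ (u : ℕ → X), (∀ n, u n ∈ K) → ∀ p ∈ K,
      Filter.Tendsto u Filter.atTop (nhds p) →
      ∀ f : X →L[ℝ] ℝ, Filter.Tendsto (fun n => f (F (u n))) Filter.atTop (nhds (f (F p)))) :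
    ∃ x : X, x ∈ K ∧ F x = x ∧ coneLe K x (F 0) ∧
      (∀ y ∈ K, F y = y → y = x) ∧
      ∀ z ∈ K, Filter.Tendsto (fun n => F^[n] z) Filter.atTop (nhds x) :=
  decreasing_demicontinuous_unique_fixed_point_of_regular_general K hKclosed hK0 hKadd hreg F hFmaps
    hFdec hH1 hFdemi
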